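/- For any graph G, any vertex v of G, and any ℓ ≥ 0, the ℓ-leaky forcing numbers satisfy −1 ≤ Z_{(ℓ)}(G − v) − Z_{(ℓ)}(G) ≤ deg(v). -/

import Mathlib

/-!
Deleting `v`: an optimal leaky forcing set of `G` together with the neighbours of `v` still forces
`G - v` under every leak set, because a force performed by `v` lands on a vertex that is already
blue. Re-inserting `v`: an optimal set of `G - v` together with `v` forces `G`, because a blue `v`
never blocks a force of `G - v`. Both arguments work for deleting any vertex set `sᶜ`.
-/

open SimpleGraph

namespace LF

variable {V : Type*}

/-- Vertices eventually forced blue, starting from `S`, with leak set `L`: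
a blue vertex not in `L` whose every neighbor other than `w` is blue forces `w`. -/
inductive Forced (G : SimpleGraph V) (L S : Set V) : V → Prop
  | init (v : V) (hv : v ∈ S) : Forced G L S v
  | force (b w : V) (hb : Forced G L S b) (hbL : b ∉ L) (hadj : G.Adj b w)
      (hall : ∀ u, G.Adj b u → u ≠ w → Forced G L S u) : Forced G L S w

/-- `S` is an ℓ-leaky forcing set of `G`. -/
def IsLeakyForcingSet (G : SimpleGraph V) (ℓ : ℕ) (S : Set V) : Prop :=
  ∀ L : Set V, L.ncard ≤ ℓ → ∀ v, Forced G L S v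

/-- The ℓ-leaky forcing number `Z_{(ℓ)}(G)`. -/
noncomputable def leakyForcingNumber (G : SimpleGraph V) [Fintype V] (ℓ : ℕ) : ℕ :=
  sInf {k | ∃ S : Finset V, S.card = k ∧ IsLeakyForcingSet G ℓ ↑S}

/-- An ℓ-leaky fort: a nonempty set `F` such that at most ℓ vertices outside `F`
have exactly one neighbor in `F`. -/
def IsLeakyFort (G : SimpleGraph V) (ℓ : ℕ) (F : Set V) : Prop :=
  F.Nonempty ∧ {v | v ∉ F ∧ ∃! u, u ∈ F ∧ G.Adj v u}.ncard ≤ ℓ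

/-- The path graph on `n` vertices. -/
def pathGraph (n : ℕ) : SimpleGraph (Fin n) :=
  SimpleGraph.fromRel (fun i j => i.val + 1 = j.val)

/-- The cycle graph on `n` vertices. -/
def cycleGraph (n : ℕ) : SimpleGraph (Fin n) :=
  SimpleGraph.fromRel (fun i j => (i.val + 1) % n = j.val)

/-- The star graph on `n` vertices, with center `0`. -/
def starGraph (n : ℕ) : SimpleGraph (Fin n) :=
  SimpleGraph.fromRel (fun i _ => i.val = 0)

/-- The generalized Petersen graph `P(n,k)`: `Sum.inl i` is the inner vertex `x_{i+1}`,
`Sum.inr i` is the outer vertex `y_{i+1}` (0-indexed). -/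
def petersen (n k : ℕ) : SimpleGraph (Fin n ⊕ Fin n) :=
  SimpleGraph.fromRel (fun a b =>
    match a, b with
    | Sum.inr i, Sum.inr j => (i.val + 1) % n = j.val
    | Sum.inl i, Sum.inr j => i = j
    | Sum.inl i, Sum.inl j => (i.val + k) % n = j.val
    | _, _ => False)

end LF

namespace LF

open Set

variable {V : Type*} {G : SimpleGraph V} {ℓ : ℕ}

theorem Forced.mono {L S T : Set V} (hST : S ⊆ T) {w : V} (hw : Forced G L S w) :
    Forced G L T w := by
  induction hw with
  | init w hw => exact .init w (hST hw)
  | force b w _ hbL hadj _ ihb ihall => exact .force b w ihb hbL hadj ihall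

theorem Forced.induce {s L S : Set V} (hS : ∀ b ∉ s, ∀ w ∈ s, G.Adj b w → w ∈ S) {w : V}
    (hw : Forced G L S w) (hws : w ∈ s) :
    Forced (G.induce s) (Subtype.val ⁻¹' L) (Subtype.val ⁻¹' S) ⟨w, hws⟩ := by
  induction hw with
  | init w hw => exact .init _ hw
  | force b w _ hbL hadj _ ihb ihall =>
    by_cases hbs : b ∈ s
    · exact .force (⟨b, hbs⟩ : s) _ (ihb hbs) hbL hadj
        fun u (hbu : G.Adj b u) huw => ihall u hbu (fun h => huw (Subtype.ext h)) u.2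
    · exact .init _ (hS b hbs w hws hadj)

theorem Forced.of_induce {s L : Set V} {S : Set s} {w : s}
    (hw : Forced (G.induce s) (Subtype.val ⁻¹' L) S w) :
    Forced G L (Subtype.val '' S ∪ sᶜ) w := by
  induction hw with
  | init w hw => exact .init _ (.inl ⟨w, hw, rfl⟩)
  | force b w _ hbL hadj _ ihb ihall =>
    refine .force (b : V) w ihb hbL hadj fun u hbu huw => ?_
    by_cases hus : u ∈ s
    · exact ihall ⟨u, hus⟩ hbu fun h => huw (congrArg Subtype.val h)
    · exact .init _ (.inr hus)

theorem IsLeakyForcingSet.mono {S T : Set V} (hS : IsLeakyForcingSet G ℓ S) (hST : S ⊆ T) :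
    IsLeakyForcingSet G ℓ T :=
  fun L hL w => (hS L hL w).mono hST

theorem IsLeakyForcingSet.induce {s S : Set V} (hS : IsLeakyForcingSet G ℓ S)
    (hbdry : ∀ b ∉ s, ∀ w ∈ s, G.Adj b w → w ∈ S) :
    IsLeakyForcingSet (G.induce s) ℓ (Subtype.val ⁻¹' S) := by
  intro L hL w
  have hw := (hS (Subtype.val '' L) (by rwa [ncard_image_of_injective _ Subtype.val_injective])
    w).induce hbdry w.2
  rwa [preimage_image_eq _ Subtype.val_injective] at hw

theorem IsLeakyForcingSet.of_induce [Finite V] {s : Set V} {S : Set s}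
    (hS : IsLeakyForcingSet (G.induce s) ℓ S) :
    IsLeakyForcingSet G ℓ (Subtype.val '' S ∪ sᶜ) := by
  intro L hL w
  by_cases hws : w ∈ s
  · refine Forced.of_induce (w := ⟨w, hws⟩) (hS _ (le_trans ?_ hL) _)
    rw [← ncard_image_of_injective _ Subtype.val_injective]
    exact ncard_le_ncard (image_preimage_subset _ _)
  · exact .init _ (.inr hws)

section Number

variable [Fintype V]

theorem exists_isLeakyForcingSet_card_eq (G : SimpleGraph V) (ℓ : ℕ) :
    ∃ S : Finset V, S.card = leakyForcingNumber G ℓ ∧ IsLeakyForcingSet G ℓ ↑S :=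
  Nat.sInf_mem (s := {k | ∃ S : Finset V, S.card = k ∧ IsLeakyForcingSet G ℓ ↑S})
    ⟨_, Finset.univ, rfl, fun _ _ w => .init w (Finset.mem_univ w)⟩

theorem leakyForcingNumber_le_card {S : Finset V} (hS : IsLeakyForcingSet G ℓ ↑S) :
    leakyForcingNumber G ℓ ≤ S.card :=
  Nat.sInf_le ⟨S, rfl, hS⟩

theorem leakyForcingNumber_induce_le_add (G : SimpleGraph V) (ℓ : ℕ) (s : Set V) [Fintype s]
    (B : Finset V) (hB : ∀ b ∉ s, ∀ w ∈ s, G.Adj b w → w ∈ B) :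
    leakyForcingNumber (G.induce s) ℓ ≤ leakyForcingNumber G ℓ + B.card := by
  classical
  obtain ⟨S, hcard, hS⟩ := exists_isLeakyForcingSet_card_eq G ℓ
  have hSB : IsLeakyForcingSet (G.induce s) ℓ ↑((S ∪ B).subtype (· ∈ s)) := by
    convert (hS.mono (Finset.coe_subset.mpr Finset.subset_union_left)).induce
      fun b hb w hw hbw => Finset.mem_union_right S (hB b hb w hw hbw)
    ext; simp
  calc leakyForcingNumber (G.induce s) ℓ ≤ ((S ∪ B).subtype (· ∈ s)).card :=
        leakyForcingNumber_le_card hSB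
    _ ≤ (S ∪ B).card := by rw [Finset.card_subtype]; exact Finset.card_filter_le _ _
    _ ≤ leakyForcingNumber G ℓ + B.card := hcard ▸ Finset.card_union_le S B

theorem leakyForcingNumber_le_induce_add (G : SimpleGraph V) (ℓ : ℕ) (s : Set V) [Fintype s] :
    leakyForcingNumber G ℓ ≤ leakyForcingNumber (G.induce s) ℓ + sᶜ.ncard := by
  classical
  obtain ⟨S, hcard, hS⟩ := exists_isLeakyForcingSet_card_eq (G.induce s) ℓ
  have hSc : IsLeakyForcingSet G ℓ ↑(S.map (Function.Embedding.subtype _) ∪ sᶜ.toFinset) := by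
    convert hS.of_induce; simp
  calc leakyForcingNumber G ℓ ≤ (S.map (Function.Embedding.subtype _) ∪ sᶜ.toFinset).card :=
        leakyForcingNumber_le_card hSc
    _ ≤ S.card + sᶜ.toFinset.card := by
        rw [← S.card_map (Function.Embedding.subtype _)]; exact Finset.card_union_le _ _
    _ = leakyForcingNumber (G.induce s) ℓ + sᶜ.ncard := by rw [hcard, ncard_eq_toFinset_card']

end Number

end LF

theorem stmt15 {V : Type*} [Fintype V] [DecidableEq V] (G : SimpleGraph V)
    [DecidableRel G.Adj] (ℓ : ℕ) (v : V) :
    -1 ≤ (LF.leakyForcingNumber (G.induce {w | w ≠ v}) ℓ : ℤ) -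
        LF.leakyForcingNumber G ℓ ∧
    (LF.leakyForcingNumber (G.induce {w | w ≠ v}) ℓ : ℤ) -
        LF.leakyForcingNumber G ℓ ≤ G.degree v := by
  have hdel := LF.leakyForcingNumber_induce_le_add G ℓ {w | w ≠ v} (G.neighborFinset v)
    fun b hb w _ hbw => by simp_all
  have hadd := LF.leakyForcingNumber_le_induce_add G ℓ {w | w ≠ v}
  rw [G.card_neighborFinset_eq_degree] at hdel
  rw [show {w | w ≠ v}ᶜ = ({v} : Set V) by ext; simp, Set.ncard_singleton] at hadd
  omega
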